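/- arXiv:1603.05004 — 2 statements merged into one kernel-verified Lean document; each statement's English description precedes it below -/
import Mathlib

section
/- Under hypotheses H1–H3, for every x ∈ ℝ^n_+ with ‖x^i‖ > 0, the long-term growth rate of species i satisfies r_i(x) ≤ 0. -/
/-
Primitivity makes the cocycle `A_i(X_0) ⋯ A_i(X_{t₀-1})` entrywise positive for the
primitivity exponent `t₀` of `P_i`, so a present species has an entrywise positive state
vector `v = X_{t₀}^i`. Since all later factors are nonnegative,
`X_t^i = v · A_i(X_{t₀}) ⋯ A_i(X_{t-1})` has ℓ¹-norm at least
`(min_j v_j) · ‖A_i(X_{t₀}) ⋯ A_i(X_{t-1})‖`, while it stays bounded once the orbit has entered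
the compact set `S_A`. Hence the cocycle is eventually bounded and its exponential growth rate
is at most `0`.
-/

open MeasureTheory Filter Topology

noncomputable section

namespace RP

/-- The state space: species `i` has `n i` individual states;
points are tuples of row vectors. -/
abbrev St (m : ℕ) (n : Fin m → ℕ) := ∀ i : Fin m, Fin (n i) → ℝ

/-- A block-diagonal collection of matrices, one block per species. -/
abbrev Blocks (m : ℕ) (n : Fin m → ℕ) := ∀ i : Fin m, Matrix (Fin (n i)) (Fin (n i)) ℝ

variable {m : ℕ} {n : Fin m → ℕ}

/-- The nonnegative cone `ℝ^n_+`. -/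
def cone (m : ℕ) (n : Fin m → ℕ) : Set (St m n) := {x | ∀ i j, 0 ≤ x i j}

/-- The ℓ¹-norm `‖x^i‖` of the subvector of species `i`. -/
def snorm (x : St m n) (i : Fin m) : ℝ := ∑ j, |x i j|

/-- The extinction set `S₀ = {x ∈ ℝ^n_+ : ∏ᵢ ‖x^i‖ = 0}`. -/
def extinct (m : ℕ) (n : Fin m → ℕ) : Set (St m n) :=
  {x ∈ cone m n | ∏ i, snorm x i = 0}

/-- The update map `Φ_A (x) = x A(x)` (blockwise, row vectors on the left). -/
def Phi (A : St m n → Blocks m n) (x : St m n) : St m n :=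
  fun i => Matrix.vecMul (x i) (A x i)

/-- An explicit norm on matrices (sum of absolute values of the entries). -/
def mnorm {a b : Type*} [Fintype a] [Fintype b] (M : Matrix a b ℝ) : ℝ :=
  ∑ j, ∑ k, |M j k|

/-- The matrix cocycle `A_i(X_0) A_i(X_1) ⋯ A_i(X_{t-1})` along the orbit of `x`. -/
def coc (A : St m n → Blocks m n) (i : Fin m) (x : St m n) :
    ℕ → Matrix (Fin (n i)) (Fin (n i)) ℝ
  | 0 => 1
  | t + 1 => coc A i x t * A ((Phi A)^[t] x) i

/-- The long-term growth rate `r_i(x)` of species `i` starting from `x`. -/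
def rate (A : St m n → Blocks m n) (i : Fin m) (x : St m n) : ℝ :=
  Filter.limsup (fun t : ℕ => Real.log (mnorm (coc A i x t)) / t) Filter.atTop

/-- The long-term growth rate `r_i(μ) = ∫ r_i dμ`. -/
def rateMu (A : St m n → Blocks m n) (i : Fin m) (μ : Measure (St m n)) : ℝ :=
  ∫ x, rate A i x ∂μ

/-- A nonnegative primitive matrix. -/
def IsPrimitive {d : ℕ} (P : Matrix (Fin d) (Fin d) ℝ) : Prop :=
  (∀ j k, 0 ≤ P j k) ∧ ∃ t : ℕ, 0 < t ∧ ∀ j k, 0 < (P ^ t) j k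

/-- Hypotheses H1–H3 of the model. -/
structure Hyp (A : St m n → Blocks m n) (SA : Set (St m n)) : Prop where
  H1cont : Continuous A
  H1nonneg : ∀ x i j k, 0 ≤ A x i j k
  H2 : ∀ i, ∃ P : Matrix (Fin (n i)) (Fin (n i)) ℝ, IsPrimitive P ∧
    ∀ x ∈ cone m n, ∀ j k, (A x i j k = 0 ↔ P j k = 0)
  H3compact : IsCompact SA
  H3sub : SA ⊆ cone m n
  H3absorb : ∀ x ∈ cone m n, ∃ T : ℕ, ∀ t ≥ T, (Phi A)^[t] x ∈ SA

/-- The ω-limit set of `x` under iteration of `f`. -/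
def omegaSet {X : Type*} [TopologicalSpace X] (f : X → X) (x : X) : Set X :=
  {y | ∃ tk : ℕ → ℕ, StrictMono tk ∧ Tendsto (fun s => f^[tk s] x) atTop (𝓝 y)}

/-- `M` is an isolated invariant set for `f` restricted to `Y`: it has a compact
neighborhood `N` in `Y` whose largest invariant subset is contained in `M`. -/
def IsolatedIn {X : Type*} [TopologicalSpace X] (f : X → X) (M Y : Set X) : Prop :=
  ∃ N : Set X, IsCompact N ∧ N ⊆ Y ∧ M ⊆ N ∧ (∀ x ∈ M, N ∈ 𝓝[Y] x) ∧
    ∀ K ⊆ N, f '' K = K → K ⊆ M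

/-- `M ⊆ S₀` is unsaturated: isolated in all of `ℝ^n_+` and its stable set
lies in `S₀`. -/
def Unsaturated (A : St m n → Blocks m n) (M : Set (St m n)) : Prop :=
  IsolatedIn (Phi A) M (cone m n) ∧
    ∀ x ∈ cone m n, omegaSet (Phi A) x ⊆ M → x ∈ extinct m n

/-- The δ-neighborhood of a set within the cone. -/
def nbhd (S : Set (St m n)) (δ : ℝ) : Set (St m n) :=
  {x ∈ cone m n | ∃ y ∈ S, dist x y < δ}

/-- A δ-perturbation of the model `(A, S_A)`. -/
structure Pert (A : St m n → Blocks m n) (SA : Set (St m n)) (δ : ℝ)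
    (B : St m n → Blocks m n) (SB : Set (St m n)) : Prop where
  hyp : Hyp B SB
  sub : SB ⊆ nbhd SA δ
  close : ∀ x ∈ nbhd SA 1, ∀ i j k, |A x i j k - B x i j k| ≤ δ

/-- Permanence with repulsion constant `η`. -/
def PermanentWith (f : St m n → St m n) (η : ℝ) : Prop :=
  ∀ x ∈ cone m n, (∀ i, 0 < snorm x i) →
    ∃ T : ℕ, ∀ t ≥ T, ∀ i, η < snorm (f^[t] x) i

/-- Permanence. -/
def Permanent (f : St m n → St m n) : Prop := ∃ η > 0, PermanentWith f η

/-- Robust permanence: all sufficiently small perturbations are permanent with a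
common constant. -/
def RobustlyPermanent (A : St m n → Blocks m n) (SA : Set (St m n)) : Prop :=
  ∃ δ > 0, ∃ η > 0, ∀ B SB, Pert A SA δ B SB → PermanentWith (Phi B) η

/-- The global attractor `G_A`. -/
def GA (A : St m n → Blocks m n) (SA : Set (St m n)) : Set (St m n) :=
  ⋂ s : ℕ, closure (⋃ t ∈ Set.Ici s, (Phi A)^[t] '' SA)

/-- A backward orbit through `x` lying in `M`. -/
def BackOrbit {X : Type*} (f : X → X) (M : Set X) (x : X) (σ : ℕ → X) : Prop :=
  σ 0 = x ∧ (∀ s, f (σ (s + 1)) = σ s) ∧ ∀ s, σ s ∈ M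

/-- The α-limit set of a backward orbit. -/
def alphaSet {X : Type*} [TopologicalSpace X] (σ : ℕ → X) : Set X :=
  {y | ∃ sk : ℕ → ℕ, StrictMono sk ∧ Tendsto (fun s => σ (sk s)) atTop (𝓝 y)}

/-- A Morse decomposition `{M_1, …, M_k}` of a compact invariant set `M` for `f`. -/
def MorseDecomp {X : Type*} [TopologicalSpace X] (f : X → X) (M : Set X)
    {k : ℕ} (Ms : Fin k → Set X) : Prop :=
  (∀ a b, a ≠ b → Disjoint (Ms a) (Ms b)) ∧
  (∀ a, Ms a ⊆ M ∧ IsCompact (Ms a) ∧ f '' Ms a = Ms a ∧ IsolatedIn f (Ms a) M) ∧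
  (∀ x ∈ M \ ⋃ a, Ms a, ∃ a, omegaSet f x ⊆ Ms a ∧
    ∀ σ : ℕ → X, BackOrbit f M x σ → ∃ b, a < b ∧ alphaSet σ ⊆ Ms b)

/-- `μ` is a weak* limit point of the sequence of measures `Lam`. -/
def WeakLimitPt {X : Type*} [TopologicalSpace X] [MeasurableSpace X]
    (Lam : ℕ → Measure X) (μ : Measure X) : Prop :=
  ∃ tk : ℕ → ℕ, StrictMono tk ∧
    ∀ g : BoundedContinuousFunction X ℝ,
      Tendsto (fun s => ∫ y, g y ∂(Lam (tk s))) atTop (𝓝 (∫ y, g y ∂μ))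

/-- The empirical occupation measures `Lam_t(x) = (1/t) ∑_{s<t} δ_{f^s(x)}`. -/
def emp {X : Type*} [MeasurableSpace X] (f : X → X) (x : X) (t : ℕ) : Measure X :=
  (t : ENNReal)⁻¹ • ∑ s ∈ Finset.range t, Measure.dirac (f^[s] x)

/-- An invariant Borel probability measure for `f`. -/
def InvProb {X : Type*} [MeasurableSpace X] (f : X → X) (μ : Measure X) : Prop :=
  IsProbabilityMeasure μ ∧ μ.map f = μ

end RP

open Finset

namespace RP

variable {m : ℕ} {n : Fin m → ℕ}

section MatrixNorm

variable {a b c : Type*} [Fintype a] [Fintype b] [Fintype c]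

lemma mnorm_nonneg (M : Matrix a b ℝ) : 0 ≤ mnorm M :=
  sum_nonneg fun _ _ => sum_nonneg fun _ _ => abs_nonneg _

lemma sum_abs_row_le_mnorm (M : Matrix a b ℝ) (j : a) : ∑ k, |M j k| ≤ mnorm M :=
  single_le_sum (f := fun j => ∑ k, |M j k|) (fun _ _ => by positivity) (mem_univ j)

lemma mnorm_mul_le (M : Matrix a b ℝ) (N : Matrix b c ℝ) :
    mnorm (M * N) ≤ mnorm M * mnorm N := by
  calc mnorm (M * N) ≤ ∑ j, ∑ k, ∑ l, |M j l| * |N l k| := by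
        unfold mnorm
        gcongr with j _ k _
        simpa only [Matrix.mul_apply, abs_mul] using
          abs_sum_le_sum_abs (fun l => M j l * N l k) univ
    _ = ∑ j, ∑ l, |M j l| * ∑ k, |N l k| := by
        simp_rw [mul_sum]
        exact sum_congr rfl fun _ _ => sum_comm
    _ ≤ ∑ j, ∑ l, |M j l| * mnorm N := by
        gcongr with j _ l _
        exact sum_abs_row_le_mnorm N l
    _ = mnorm M * mnorm N := by
        simp_rw [← sum_mul]
        rfl

lemma mul_mnorm_le_sum_abs_vecMul {v : a → ℝ} {C : Matrix a b ℝ} {c : ℝ}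
    (hC : ∀ j k, 0 ≤ C j k) (hv : ∀ j, c ≤ v j) :
    c * mnorm C ≤ ∑ k, |Matrix.vecMul v C k| := by
  calc c * mnorm C = ∑ k, ∑ j, c * C j k := by
        simp_rw [mnorm, abs_of_nonneg (hC _ _), mul_sum]
        exact sum_comm
    _ ≤ ∑ k, ∑ j, v j * C j k := by
        gcongr with k _ j _
        · exact hC j k
        · exact hv j
    _ ≤ ∑ k, |Matrix.vecMul v C k| := sum_le_sum fun _ _ => le_abs_self _

end MatrixNorm

lemma mul_apply_pos_of_pos_imp_pos {a b c : Type*} [Fintype b]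
    {P M : Matrix a b ℝ} {Q N : Matrix b c ℝ}
    (hP : ∀ j k, 0 ≤ P j k) (hQ : ∀ j k, 0 ≤ Q j k)
    (hM : ∀ j k, 0 ≤ M j k) (hN : ∀ j k, 0 ≤ N j k)
    (hPM : ∀ j k, 0 < P j k → 0 < M j k) (hQN : ∀ j k, 0 < Q j k → 0 < N j k)
    {j : a} {k : c} (hPQ : 0 < (P * Q) j k) : 0 < (M * N) j k := by
  rw [Matrix.mul_apply, sum_pos_iff_of_nonneg fun l _ => mul_nonneg (hP j l) (hQ l k)] at hPQ
  obtain ⟨l, -, hl⟩ := hPQ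
  rw [Matrix.mul_apply]
  refine sum_pos' (fun l _ => mul_nonneg (hM j l) (hN l k)) ⟨l, mem_univ l, ?_⟩
  exact mul_pos (hPM j l (pos_of_mul_pos_left hl (hQ l k)))
    (hQN l k (pos_of_mul_pos_right hl (hP j l)))

lemma exists_pos_forall_le {ι : Type*} [Finite ι] {v : ι → ℝ} (hv : ∀ j, 0 < v j) :
    ∃ c > 0, ∀ j, c ≤ v j := by
  cases isEmpty_or_nonempty ι
  · exact ⟨1, one_pos, isEmptyElim⟩
  · obtain ⟨j₀, hj₀⟩ := Finite.exists_min v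
    exact ⟨v j₀, hv j₀, hj₀⟩

lemma continuous_snorm (i : Fin m) : Continuous fun x : St m n => snorm x i := by
  unfold snorm
  fun_prop

section Cocycle

variable {A : St m n → Blocks m n}

lemma phi_mem_cone (hA : ∀ x i j k, 0 ≤ A x i j k) {x : St m n} (hx : x ∈ cone m n) :
    Phi A x ∈ cone m n := by
  intro i j
  unfold Phi Matrix.vecMul dotProduct
  exact sum_nonneg fun k _ => mul_nonneg (hx i k) (hA x i k j)

lemma iterate_phi_mem_cone (hA : ∀ x i j k, 0 ≤ A x i j k) {x : St m n}
    (hx : x ∈ cone m n) (t : ℕ) : (Phi A)^[t] x ∈ cone m n := by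
  induction t with
  | zero => exact hx
  | succ t ih => rw [Function.iterate_succ_apply']; exact phi_mem_cone hA ih

lemma coc_nonneg (hA : ∀ x i j k, 0 ≤ A x i j k) (i : Fin m) (x : St m n) (t : ℕ) :
    ∀ j k, 0 ≤ coc A i x t j k := by
  induction t with
  | zero =>
      intro j k
      rw [coc, Matrix.one_apply]
      split_ifs <;> norm_num
  | succ t ih =>
      intro j k
      rw [coc, Matrix.mul_apply]
      exact sum_nonneg fun l _ => mul_nonneg (ih j l) (hA _ i l k)

lemma iterate_phi_apply (i : Fin m) (x : St m n) (t : ℕ) :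
    ((Phi A)^[t] x) i = Matrix.vecMul (x i) (coc A i x t) := by
  induction t with
  | zero => simp [coc]
  | succ t ih =>
      rw [Function.iterate_succ_apply', coc, ← Matrix.vecMul_vecMul, ← ih]
      rfl

lemma coc_add (i : Fin m) (x : St m n) (t s : ℕ) :
    coc A i x (t + s) = coc A i x t * coc A i ((Phi A)^[t] x) s := by
  induction s with
  | zero => simp [coc]
  | succ s ih =>
      rw [← add_assoc, coc, ih, coc, Matrix.mul_assoc, add_comm t s, Function.iterate_add_apply]

lemma coc_apply_pos_of_pow_apply_pos (hA : ∀ x i j k, 0 ≤ A x i j k) {i : Fin m}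
    {P : Matrix (Fin (n i)) (Fin (n i)) ℝ} (hP : ∀ j k, 0 ≤ P j k)
    (hAP : ∀ x ∈ cone m n, ∀ j k, (A x i j k = 0 ↔ P j k = 0))
    {x : St m n} (hx : x ∈ cone m n) (t : ℕ) :
    ∀ j k, 0 < (P ^ t) j k → 0 < coc A i x t j k := by
  induction t with
  | zero => intro j k h; simpa [coc] using h
  | succ t ih =>
      have hAP_pos : ∀ j k, 0 < P j k → 0 < A ((Phi A)^[t] x) i j k := fun j k hPjk =>
        (hA _ i j k).lt_of_ne fun h =>
          hPjk.ne' ((hAP _ (iterate_phi_mem_cone hA hx t) j k).1 h.symm)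
      exact fun j k => mul_apply_pos_of_pos_imp_pos (Matrix.pow_apply_nonneg hP t) hP
        (coc_nonneg hA i x t) (hA _ i) ih hAP_pos

lemma iterate_phi_apply_pos (hA : ∀ x i j k, 0 ≤ A x i j k) {i : Fin m} {t : ℕ}
    {x : St m n} (hx : x ∈ cone m n) (hcoc : ∀ j k, 0 < coc A i x t j k)
    (hi : 0 < snorm x i) (j : Fin (n i)) : 0 < ((Phi A)^[t] x) i j := by
  obtain ⟨k, -, hk⟩ := (sum_pos_iff_of_nonneg fun k _ => abs_nonneg (x i k)).1 hi
  rw [abs_of_nonneg (hx i k)] at hk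
  rw [iterate_phi_apply]
  exact sum_pos' (fun l _ => mul_nonneg (hx i l) (coc_nonneg hA i x t l j))
    ⟨k, mem_univ k, mul_pos hk (hcoc k j)⟩

lemma mul_mnorm_coc_le_snorm_iterate_phi (hA : ∀ x i j k, 0 ≤ A x i j k) {i : Fin m}
    {y : St m n} {c : ℝ} (hy : ∀ j, c ≤ y i j) (s : ℕ) :
    c * mnorm (coc A i y s) ≤ snorm ((Phi A)^[s] y) i := by
  rw [snorm, iterate_phi_apply]
  exact mul_mnorm_le_sum_abs_vecMul (coc_nonneg hA i y s) hy

end Cocycle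

lemma limsup_nonpos_of_forall_pos_eventually_le {α : Type*} {f : Filter α} {u : α → ℝ}
    (h : ∀ ε > 0, ∀ᶠ x in f, u x ≤ ε) : limsup u f ≤ 0 := by
  rw [limsup_eq]
  by_cases hbdd : BddBelow {a | ∀ᶠ x in f, u x ≤ a}
  · exact le_of_forall_pos_le_add fun ε hε =>
      (csInf_le hbdd (h ε hε)).trans_eq (zero_add ε).symm
  · rw [Real.sInf_of_not_bddBelow hbdd]

lemma limsup_log_div_nonpos {u : ℕ → ℝ} {B : ℝ} (hu : ∀ t, 0 ≤ u t)
    (hB : ∀ᶠ t in atTop, u t ≤ B) :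
    limsup (fun t : ℕ => Real.log (u t) / t) atTop ≤ 0 := by
  refine limsup_nonpos_of_forall_pos_eventually_le fun ε hε => ?_
  filter_upwards [hB, (tendsto_const_div_atTop_nhds_zero_nat B).eventually (gt_mem_nhds hε)]
    with t hBt hεt
  calc Real.log (u t) / t ≤ B / t := by
        gcongr
        exact (Real.log_le_self (hu t)).trans hBt
    _ ≤ ε := hεt.le

lemma coc_eventually_bounded {A : St m n → Blocks m n} {SA : Set (St m n)} (hA : Hyp A SA)
    {x : St m n} (hx : x ∈ cone m n) {i : Fin m} (hi : 0 < snorm x i) :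
    ∃ B, ∀ᶠ t in atTop, mnorm (coc A i x t) ≤ B := by
  obtain ⟨P, ⟨hP, t₀, -, hPt₀⟩, hAP⟩ := hA.H2 i
  set y := (Phi A)^[t₀] x
  obtain ⟨c, hc, hcy⟩ := exists_pos_forall_le <| iterate_phi_apply_pos hA.H1nonneg hx
    (fun j k => coc_apply_pos_of_pow_apply_pos hA.H1nonneg hP hAP hx t₀ j k (hPt₀ j k)) hi
  obtain ⟨K, hK⟩ := hA.H3compact.bddAbove_image (continuous_snorm i).continuousOn
  obtain ⟨T, hT⟩ := hA.H3absorb x hx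
  refine ⟨mnorm (coc A i x t₀) * (K / c), ?_⟩
  filter_upwards [eventually_ge_atTop (t₀ + T)] with t ht
  obtain ⟨s, rfl⟩ := Nat.exists_eq_add_of_le (le_of_add_le_left ht)
  have hys : (Phi A)^[s] y ∈ SA := by
    rw [← Function.iterate_add_apply, add_comm]
    exact hT _ (by omega)
  have hbound : mnorm (coc A i y s) ≤ K / c := by
    rw [le_div_iff₀' hc]
    exact (mul_mnorm_coc_le_snorm_iterate_phi hA.H1nonneg hcy s).trans (hK ⟨_, hys, rfl⟩)
  calc mnorm (coc A i x (t₀ + s)) ≤ mnorm (coc A i x t₀) * mnorm (coc A i y s) := by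
        rw [coc_add]
        exact mnorm_mul_le _ _
    _ ≤ mnorm (coc A i x t₀) * (K / c) := by gcongr; exact mnorm_nonneg _

/-- whenever species `i` is present (`‖x^i‖ > 0`), its long-term
growth rate is nonpositive. -/
theorem rate_nonpos_of_present {m : ℕ} {n : Fin m → ℕ}
    (A : St m n → Blocks m n) (SA : Set (St m n)) (hA : Hyp A SA)
    (x : St m n) (hx : x ∈ cone m n) (i : Fin m) (hi : 0 < snorm x i) :
    rate A i x ≤ 0 := by
  obtain ⟨B, hB⟩ := coc_eventually_bounded hA hx hi
  exact limsup_log_div_nonpos (fun t => mnorm_nonneg _) hB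

end RP
end
end

section
/- Consider the annual plant model with seed bank x^i_{t+1} = g_i x^i_t exp(Y_i − Σ_{j=1}^m C_{ij} g_j x^j_t) + (1−g_i)s_i x^i_t on ℝ^m_+, where Y_i > 0, C_{ij} > 0 for all i,j, s_i ∈ [0,1), and g_i ∈ (0,1]. If there exist positive reals p_1,…,p_m such that Σ_{i=1}^m p_i (Y_i − Σ_{j=1}^m C_{ij} x̂_j) > 0 for every fixed point x̂ in the extinction set S_0 = {x ∈ ℝ^m_+ : ∏_i x_i = 0} of the Lotka–Volterra system x_{t+1}^i = x_t^i exp(Y_i − Σ_j C_{ij} x_t^j), then there exists g̃ ∈ (0,1) such that the annual plant model is permanent for every germination vector g ∈ (g̃,1)^m. -/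
/-!
Along an orbit, `V(x) = ∑ pᵢ log xᵢ` changes by the Birkhoff sums of the log-growth
`∑ pᵢ log rᵢ`, where `rᵢ` is the per-capita growth factor. Every orbit enters an invariant cube.
For the Lotka–Volterra map (`g = 1`) these sums eventually become positive from every point of
the cube with a vanishing coordinate; by compactness and continuity in `(g, x)`, for `g` near `1`
they reach a fixed `ε > 0` within `N` steps from every point of the cube near its boundary.
Since `V` is bounded above on the cube and drops by a bounded amount per step, it eventually
stays above a constant, which keeps every coordinate away from `0`.
-/

open Filter Topology

noncomputable section

namespace AnnualPlant

/-- The annual plant model with a seed bank: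
`x^i ↦ gᵢ xᵢ exp(Yᵢ − ∑ⱼ Cᵢⱼ gⱼ xⱼ) + (1−gᵢ) sᵢ xᵢ`. -/
def APmap {m : ℕ} (Y : Fin m → ℝ) (C : Matrix (Fin m) (Fin m) ℝ)
    (s g : Fin m → ℝ) (x : Fin m → ℝ) : Fin m → ℝ :=
  fun i => g i * x i * Real.exp (Y i - ∑ j, C i j * (g j * x j)) +
    (1 - g i) * s i * x i

end AnnualPlant

theorem not_bddAbove_range_of_eventually_exists_add_le {w : ℕ → ℝ} {ε : ℝ} (hε : 0 < ε)
    (h : ∀ᶠ t in atTop, ∃ n, w t + ε ≤ w (t + n)) : ¬BddAbove (Set.range w) := by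
  obtain ⟨T, hT⟩ := eventually_atTop.1 h
  have climb (k : ℕ) : ∃ t ≥ T, w T + k * ε ≤ w t := by
    induction k with
    | zero => exact ⟨T, le_rfl, by simp⟩
    | succ k ih =>
      obtain ⟨t, htT, ht⟩ := ih
      obtain ⟨n, hn⟩ := hT t htT
      exact ⟨t + n, by omega, by push_cast; linarith⟩
  rintro ⟨B, hB⟩
  obtain ⟨k, hk⟩ := exists_nat_gt ((B - w T) / ε)
  obtain ⟨t, -, ht⟩ := climb k
  have := hB ⟨t, rfl⟩
  rw [div_lt_iff₀ hε] at hk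
  linarith

theorem sub_mul_le_of_forall_sub_le {v : ℕ → ℝ} {M : ℝ}
    (hdrop : ∀ t, v t - M ≤ v (t + 1)) (q d : ℕ) : v q - d * M ≤ v (q + d) := by
  induction d with
  | zero => simp
  | succ d ih => have := hdrop (q + d); push_cast; rw [← add_assoc]; linarith

theorem eventually_sub_mul_le_of_exists_add_le {v : ℕ → ℝ} {A M ε : ℝ} {N : ℕ}
    (hN : 1 ≤ N) (hε : 0 < ε) (hM : 0 ≤ M) (hbdd : BddAbove (Set.range v))
    (hdrop : ∀ t, v t - M ≤ v (t + 1))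
    (hgain : ∀ t, v t < A → ∃ n ≤ N, v t + ε ≤ v (t + n)) :
    ∀ᶠ t in atTop, A - N * M ≤ v t := by
  obtain ⟨t₀, ht₀⟩ : ∃ t₀, A ≤ v t₀ := by
    by_contra! hlow
    exact not_bddAbove_range_of_eventually_exists_add_le hε
      (Eventually.of_forall fun t => (hgain t (hlow t)).imp fun _ h => h.2) hbdd
  -- the times `q` with `A - M ≤ v q` have gaps of length at most `N`
  have next (q : ℕ) (hq : A - M ≤ v q) : ∃ q', q < q' ∧ q' ≤ q + N ∧ A - M ≤ v q' := by
    by_cases hqA : v q < A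
    · obtain ⟨n, hnN, hn⟩ := hgain q hqA
      have hn0 : n ≠ 0 := by rintro rfl; simp at hn; linarith
      exact ⟨q + n, by omega, by omega, by linarith⟩
    · exact ⟨q + 1, by omega, by omega, by linarith [hdrop q]⟩
  have anchor : ∀ u ≥ t₀, ∃ q ≤ u, u < q + N ∧ A - M ≤ v q := by
    intro u hu
    induction u, hu using Nat.le_induction with
    | base => exact ⟨t₀, le_rfl, by omega, by linarith⟩
    | succ u _ ih =>
      obtain ⟨q, hqu, huq, hq⟩ := ih
      by_cases hlt : u + 1 < q + N
      · exact ⟨q, by omega, hlt, hq⟩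
      · obtain ⟨q', hqq', hq'N, hq'⟩ := next q hq
        exact ⟨q', by omega, by omega, hq'⟩
  filter_upwards [eventually_ge_atTop t₀] with u hu
  obtain ⟨q, hqu, huq, hq⟩ := anchor u hu
  obtain ⟨d, rfl⟩ := Nat.exists_eq_add_of_le hqu
  have hd : (d : ℝ) + 1 ≤ N := by exact_mod_cast (show d + 1 ≤ N by omega)
  nlinarith [sub_mul_le_of_forall_sub_le hdrop q d]

theorem eventually_le_of_le_affine {u : ℕ → ℝ} {a r : ℝ} (hr₀ : 0 ≤ r) (hr₁ : r < 1)
    (h : ∀ t, u (t + 1) ≤ a + r * u t) : ∀ᶠ t in atTop, u t ≤ a / (1 - r) + 1 := by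
  have hfix : a + r * (a / (1 - r)) = a / (1 - r) := by
    field_simp [(sub_pos.2 hr₁).ne']; ring
  have hgeom (t : ℕ) : u t - a / (1 - r) ≤ r ^ t * (u 0 - a / (1 - r)) := by
    induction t with
    | zero => simp
    | succ t ih => rw [pow_succ']; nlinarith [h t]
  have hlim : Tendsto (fun t => r ^ t * (u 0 - a / (1 - r))) atTop (𝓝 0) := by
    simpa using (tendsto_pow_atTop_nhds_zero_of_lt_one hr₀ hr₁).mul_const (u 0 - a / (1 - r))
  filter_upwards [hlim.eventually_le_const one_pos] with t ht
  linarith [hgeom t]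

theorem mul_exp_sub_mul_le {c u a : ℝ} (hc : 0 < c) :
    u * Real.exp (a - c * u) ≤ Real.exp (a - 1) / c := by
  rw [le_div_iff₀ hc]
  calc u * Real.exp (a - c * u) * c = Real.exp a * (c * u * Real.exp (-(c * u))) := by
        rw [sub_eq_add_neg, Real.exp_add]; ring
    _ ≤ Real.exp a * Real.exp (-1) := by gcongr; exact Real.mul_exp_neg_le_exp_neg_one _
    _ = Real.exp (a - 1) := by rw [← Real.exp_add, sub_eq_add_neg]

theorem IsCompact.exists_thickening_forall_exists_le {X : Type*} [PseudoMetricSpace X]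
    {K : Set X} (hK : IsCompact K) {F : ℕ → X → ℝ}
    (hF : ∀ x ∈ K, ∃ n, 0 < F n x ∧ ContinuousAt (F n) x) :
    ∃ δ > 0, ∃ N, ∃ ε > 0, ∀ y ∈ Metric.thickening δ K, ∃ n ≤ N, ε ≤ F n y := by
  suffices ∃ N, ∃ ε > 0, ∀ᶠ y in 𝓝ˢ K, ∃ n ≤ N, ε ≤ F n y by
    obtain ⟨N, ε, hε, hK'⟩ := this
    obtain ⟨δ, hδ, hδK⟩ := (Metric.hasBasis_nhdsSet_thickening hK).mem_iff.1 hK'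
    exact ⟨δ, hδ, N, ε, hε, hδK⟩
  refine hK.induction_on (p := fun t => ∃ N, ∃ ε > 0, ∀ᶠ y in 𝓝ˢ t, ∃ n ≤ N, ε ≤ F n y)
    ⟨0, 1, one_pos, by simp⟩
    (fun s t hst ⟨N, ε, hε, h⟩ => ⟨N, ε, hε, h.filter_mono (nhdsSet_mono hst)⟩) ?_ ?_
  · rintro s t ⟨N, ε, hε, hs⟩ ⟨N', ε', hε', ht⟩
    refine ⟨max N N', min ε ε', lt_min hε hε', ?_⟩
    rw [nhdsSet_union, eventually_sup]
    exact ⟨hs.mono fun y ⟨n, hn, h⟩ => ⟨n, hn.trans (le_max_left _ _), (min_le_left _ _).trans h⟩,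
      ht.mono fun y ⟨n, hn, h⟩ => ⟨n, hn.trans (le_max_right _ _), (min_le_right _ _).trans h⟩⟩
  · intro x hx
    obtain ⟨n, hpos, hcont⟩ := hF x hx
    set U := {y | F n x / 2 < F n y}
    have hU : U ∈ 𝓝 x := hcont.eventually_const_lt (by linarith)
    refine ⟨interior U, mem_nhdsWithin_of_mem_nhds (interior_mem_nhds.2 hU),
      n, F n x / 2, by linarith, ?_⟩
    filter_upwards [isOpen_interior.mem_nhdsSet.2 subset_rfl] with y hy
    exact ⟨n, le_rfl, (interior_subset (s := U) hy).le⟩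

theorem apply_iterate_eq_add_birkhoffSum {α M : Type*} [AddCommMonoid M] {f : α → α}
    {s : Set α} (hf : Set.MapsTo f s s) {V G : α → M} (hV : ∀ y ∈ s, V (f y) = V y + G y)
    {x : α} (hx : x ∈ s) (n : ℕ) : V (f^[n] x) = V x + birkhoffSum f G n x := by
  induction n with
  | zero => simp [birkhoffSum_zero]
  | succ n ih =>
    rw [Function.iterate_succ_apply', hV _ (hf.iterate n hx), ih, birkhoffSum_succ, add_assoc]

theorem Convex.birkhoffAverage_id_mem {E : Type*} [AddCommGroup E] [Module ℝ E] {s : Set E}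
    (hs : Convex ℝ s) {f : E → E} (hf : Set.MapsTo f s s) {x : E} (hx : x ∈ s) {n : ℕ}
    (hn : n ≠ 0) : birkhoffAverage ℝ f id n x ∈ s := by
  rw [birkhoffAverage, birkhoffSum, Finset.smul_sum]
  exact hs.sum_mem (fun _ _ => by positivity) (by simp [hn]) fun t _ => hf.iterate t hx

namespace AnnualPlant

open scoped Matrix

section Model

variable {m : ℕ} (Y : Fin m → ℝ) (C : Matrix (Fin m) (Fin m) ℝ) (s p : Fin m → ℝ)

def growthFactor (g x : Fin m → ℝ) (i : Fin m) : ℝ :=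
  g i * Real.exp (Y i - ∑ j, C i j * (g j * x j)) + (1 - g i) * s i

def logGrowth (g x : Fin m → ℝ) : ℝ := ∑ i, p i * Real.log (growthFactor Y C s g x i)

def lvRate (x : Fin m → ℝ) : Fin m → ℝ := Y - C *ᵥ x

/-- `exp (Y i - 1) / C i i / (1 - s i)` is the fixed point of the bound
`u ↦ exp (Y i - 1) / C i i + s i * u` for one step of the map (`APmap_le`); the `+ 1` makes
every orbit enter the cube in finite time. -/
def cubeBound (i : Fin m) : ℝ := Real.exp (Y i - 1) / C i i / (1 - s i) + 1

def face (S : Finset (Fin m)) : Set (Fin m → ℝ) :=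
  Set.Icc 0 (cubeBound Y C s) ∩ {y | ∀ j ∉ S, y j = 0}

/-- The hypothesis `hfix` of `annual_plant_permanent`, to which it is definitionally equal. -/
def PermanenceWeights : Prop :=
  ∀ x : Fin m → ℝ, 0 ≤ x → (∀ i, x i * Real.exp (lvRate Y C x i) = x i) → ∏ i, x i = 0 →
    0 < p ⬝ᵥ lvRate Y C x

def logPotential (x : Fin m → ℝ) : ℝ := ∑ i, p i * Real.log (x i)

theorem APmap_apply (g x : Fin m → ℝ) (i : Fin m) :
    APmap Y C s g x i = x i * growthFactor Y C s g x i := by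
  simp only [APmap, growthFactor]; ring

theorem growthFactor_one (x : Fin m → ℝ) (i : Fin m) :
    growthFactor Y C s 1 x i = Real.exp (lvRate Y C x i) := by
  simp [growthFactor, lvRate, Matrix.mulVec, dotProduct]

theorem APmap_one_apply (x : Fin m → ℝ) (i : Fin m) :
    APmap Y C s 1 x i = x i * Real.exp (lvRate Y C x i) := by
  rw [APmap_apply, growthFactor_one]

theorem logGrowth_one (x : Fin m → ℝ) : logGrowth Y C s p 1 x = p ⬝ᵥ lvRate Y C x := by
  simp [logGrowth, growthFactor_one, dotProduct]

theorem continuous_lvRate : Continuous (lvRate Y C) := by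
  unfold lvRate; fun_prop

theorem continuous_APmap :
    Continuous fun q : (Fin m → ℝ) × (Fin m → ℝ) => APmap Y C s q.1 q.2 := by
  unfold APmap; fun_prop

theorem continuous_iterate_APmap (n : ℕ) :
    Continuous fun q : (Fin m → ℝ) × (Fin m → ℝ) => (APmap Y C s q.1)^[n] q.2 := by
  induction n with
  | zero => exact continuous_snd
  | succ n ih =>
    simp only [Function.iterate_succ_apply']
    exact (continuous_APmap Y C s).comp (continuous_fst.prodMk ih)

theorem continuousAt_birkhoffSum_logGrowth (n : ℕ) (y : Fin m → ℝ) :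
    ContinuousAt (fun q : (Fin m → ℝ) × (Fin m → ℝ) =>
      birkhoffSum (APmap Y C s q.1) (logGrowth Y C s p q.1) n q.2) (1, y) := by
  have := continuous_iterate_APmap Y C s
  unfold birkhoffSum logGrowth growthFactor
  fun_prop (disch := simp [Real.exp_ne_zero])

end Model

section Bounds

variable {m : ℕ} {Y : Fin m → ℝ} {C : Matrix (Fin m) (Fin m) ℝ} {s : Fin m → ℝ}

theorem one_le_cubeBound (hC : ∀ i j, 0 < C i j) (hs : ∀ i, 0 ≤ s i ∧ s i < 1) (i : Fin m) :
    1 ≤ cubeBound Y C s i :=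
  le_add_of_nonneg_left <|
    div_nonneg (div_nonneg (Real.exp_pos _).le (hC i i).le) (sub_nonneg.2 (hs i).2.le)

theorem growthFactor_pos (hs₀ : ∀ i, 0 ≤ s i) {g : Fin m → ℝ} (hg : ∀ i, 0 < g i ∧ g i ≤ 1)
    (x : Fin m → ℝ) (i : Fin m) : 0 < growthFactor Y C s g x i :=
  add_pos_of_pos_of_nonneg (mul_pos (hg i).1 (Real.exp_pos _))
    (mul_nonneg (sub_nonneg.2 (hg i).2) (hs₀ i))

theorem APmap_nonneg (hs₀ : ∀ i, 0 ≤ s i) {g x : Fin m → ℝ} (hg : ∀ i, 0 ≤ g i ∧ g i ≤ 1)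
    (hx : 0 ≤ x) : 0 ≤ APmap Y C s g x := fun i =>
  add_nonneg (mul_nonneg (mul_nonneg (hg i).1 (hx i)) (Real.exp_pos _).le)
    (mul_nonneg (mul_nonneg (sub_nonneg.2 (hg i).2) (hs₀ i)) (hx i))

theorem mapsTo_APmap_pos (hs₀ : ∀ i, 0 ≤ s i) {g : Fin m → ℝ} (hg : ∀ i, 0 < g i ∧ g i ≤ 1) :
    Set.MapsTo (APmap Y C s g) {x | ∀ i, 0 < x i} {x | ∀ i, 0 < x i} := fun x hx i => by
  rw [APmap_apply]; exact mul_pos (hx i) (growthFactor_pos hs₀ hg x i)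

theorem APmap_le (hC : ∀ i j, 0 < C i j) (hs₀ : ∀ i, 0 ≤ s i) {g x : Fin m → ℝ}
    (hg : ∀ i, 0 ≤ g i ∧ g i ≤ 1) (hx : 0 ≤ x) (i : Fin m) :
    APmap Y C s g x i ≤ Real.exp (Y i - 1) / C i i + s i * x i := by
  have hgx (j : Fin m) : 0 ≤ g j * x j := mul_nonneg (hg j).1 (hx j)
  have hdiag : C i i * (g i * x i) ≤ ∑ j, C i j * (g j * x j) :=
    Finset.single_le_sum (fun j _ => mul_nonneg (hC i j).le (hgx j)) (Finset.mem_univ i)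
  have hsurv : (1 - g i) * s i * x i ≤ s i * x i := by
    nlinarith [(hg i).1, mul_nonneg (hs₀ i) (hx i)]
  calc APmap Y C s g x i
      ≤ g i * x i * Real.exp (Y i - C i i * (g i * x i)) + s i * x i := by
        unfold APmap; gcongr; exact hgx i
    _ ≤ Real.exp (Y i - 1) / C i i + s i * x i := by
        gcongr; exact mul_exp_sub_mul_le (hC i i)

theorem mapsTo_APmap_Icc (hC : ∀ i j, 0 < C i j) (hs : ∀ i, 0 ≤ s i ∧ s i < 1)
    {g : Fin m → ℝ} (hg : ∀ i, 0 ≤ g i ∧ g i ≤ 1) :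
    Set.MapsTo (APmap Y C s g) (Set.Icc 0 (cubeBound Y C s)) (Set.Icc 0 (cubeBound Y C s)) := by
  intro x ⟨hx₀, hxK⟩
  refine ⟨APmap_nonneg (fun i => (hs i).1) hg hx₀, fun i => ?_⟩
  have hK : Real.exp (Y i - 1) / C i i + s i * cubeBound Y C s i ≤ cubeBound Y C s i := by
    have : Real.exp (Y i - 1) / C i i / (1 - s i) * (1 - s i) = Real.exp (Y i - 1) / C i i :=
      div_mul_cancel₀ _ (sub_pos.2 (hs i).2).ne'
    unfold cubeBound; nlinarith [(hs i).2]
  calc APmap Y C s g x i ≤ Real.exp (Y i - 1) / C i i + s i * x i :=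
        APmap_le hC (fun i => (hs i).1) hg hx₀ i
    _ ≤ Real.exp (Y i - 1) / C i i + s i * cubeBound Y C s i := by
        gcongr; exacts [(hs i).1, hxK i]
    _ ≤ cubeBound Y C s i := hK

theorem eventually_iterate_APmap_mem_Icc (hC : ∀ i j, 0 < C i j)
    (hs : ∀ i, 0 ≤ s i ∧ s i < 1) {g x : Fin m → ℝ} (hg : ∀ i, 0 ≤ g i ∧ g i ≤ 1)
    (hx : 0 ≤ x) : ∀ᶠ t in atTop, (APmap Y C s g)^[t] x ∈ Set.Icc 0 (cubeBound Y C s) := by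
  have hnonneg (t : ℕ) : 0 ≤ (APmap Y C s g)^[t] x :=
    Set.MapsTo.iterate (s := Set.Ici 0) (fun _ hy => APmap_nonneg (fun i => (hs i).1) hg hy) t
      (Set.mem_Ici.2 hx)
  have hle (i : Fin m) : ∀ᶠ t in atTop, (APmap Y C s g)^[t] x i ≤ cubeBound Y C s i :=
    eventually_le_of_le_affine (hs i).1 (hs i).2 fun t => by
      rw [Function.iterate_succ_apply']
      exact APmap_le hC (fun i => (hs i).1) hg (hnonneg t) i
  filter_upwards [eventually_all.2 hle] with t ht using ⟨hnonneg t, ht⟩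

theorem mapsTo_APmap_one_face (hC : ∀ i j, 0 < C i j) (hs : ∀ i, 0 ≤ s i ∧ s i < 1)
    (S : Finset (Fin m)) : Set.MapsTo (APmap Y C s 1) (face Y C s S) (face Y C s S) :=
  fun x ⟨hx, hxS⟩ => ⟨mapsTo_APmap_Icc hC hs (fun _ => ⟨zero_le_one, le_rfl⟩) hx,
    fun j hj => by rw [APmap_one_apply, hxS j hj, zero_mul]⟩

theorem isCompact_face (S : Finset (Fin m)) : IsCompact (face Y C s S) := by
  refine isCompact_Icc.inter_right ?_
  simp only [Set.ofPred_forall]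
  exact isClosed_iInter fun j => isClosed_iInter fun _ =>
    isClosed_eq (continuous_apply j) continuous_const

theorem convex_face (S : Finset (Fin m)) : Convex ℝ (face Y C s S) := by
  refine (convex_Icc _ _).inter fun y hy z hz a b _ _ _ j hj => ?_
  simp [hy j hj, hz j hj]

theorem mem_thickening_face_erase (hC : ∀ i j, 0 < C i j) (hs : ∀ i, 0 ≤ s i ∧ s i < 1)
    {S : Finset (Fin m)} {y : Fin m → ℝ} (hy : y ∈ face Y C s S) {i : Fin m} {δ : ℝ}
    (hyi : y i < δ) : y ∈ Metric.thickening δ (face Y C s (S.erase i)) := by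
  have hδ : 0 < δ := (hy.1.1 i).trans_lt hyi
  refine Metric.mem_thickening_iff.2
    ⟨Function.update y i 0, ⟨⟨fun j => ?_, fun j => ?_⟩, fun j hj => ?_⟩, ?_⟩
  · rcases eq_or_ne j i with rfl | hji
    · simp
    · simpa [hji] using hy.1.1 j
  · rcases eq_or_ne j i with rfl | hji
    · simpa using (zero_lt_one.trans_le (one_le_cubeBound hC hs j)).le
    · simpa [hji] using hy.1.2 j
  · rcases eq_or_ne j i with rfl | hji
    · simp
    · simpa [hji] using hy.2 j (by simpa [hji] using hj)
  · refine (dist_pi_lt_iff hδ).2 fun j => ?_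
    rcases eq_or_ne j i with rfl | hji
    · simpa [Real.dist_eq, abs_of_nonneg (hy.1.1 j)] using hyi
    · simpa [hji] using hδ

end Bounds

section LotkaVolterra

variable {m : ℕ} {Y : Fin m → ℝ} {C : Matrix (Fin m) (Fin m) ℝ} {s : Fin m → ℝ}

theorem iterate_APmap_apply_eq_zero {g x : Fin m → ℝ} {i : Fin m} (hx : x i = 0) (n : ℕ) :
    (APmap Y C s g)^[n] x i = 0 := by
  induction n with
  | zero => exact hx
  | succ n ih => rw [Function.iterate_succ_apply', APmap_apply, ih, zero_mul]

theorem log_iterate_APmap_one {x : Fin m → ℝ} {i : Fin m} (hx : 0 < x i) (n : ℕ) :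
    Real.log ((APmap Y C s 1)^[n] x i)
      = Real.log (x i) + birkhoffSum (APmap Y C s 1) (lvRate Y C) n x i := by
  have hmaps : Set.MapsTo (APmap Y C s 1) {y | 0 < y i} {y | 0 < y i} := fun y hy => by
    simp only [Set.mem_ofPred_eq, APmap_one_apply] at hy ⊢; positivity
  rw [apply_iterate_eq_add_birkhoffSum hmaps (V := fun y => Real.log (y i))
    (G := fun y => lvRate Y C y i) (fun y hy => by
      rw [APmap_one_apply, Real.log_mul (ne_of_gt hy) (Real.exp_pos _).ne', Real.log_exp]) hx n]
  simp [birkhoffSum]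

theorem lvRate_birkhoffAverage (f : (Fin m → ℝ) → Fin m → ℝ) (x : Fin m → ℝ) {n : ℕ}
    (hn : n ≠ 0) :
    lvRate Y C (birkhoffAverage ℝ f id n x) = birkhoffAverage ℝ f (lvRate Y C) n x := by
  simp only [birkhoffAverage, birkhoffSum, lvRate, Matrix.mulVec_smul, Matrix.mulVec_sum,
    Finset.sum_sub_distrib, smul_sub, Finset.sum_const, Finset.card_range, id]
  rw [← Nat.cast_smul_eq_nsmul ℝ, smul_smul, inv_mul_cancel₀ (Nat.cast_ne_zero.2 hn), one_smul]

theorem birkhoffSum_logGrowth_one (p : Fin m → ℝ) (f : (Fin m → ℝ) → Fin m → ℝ)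
    (n : ℕ) (x : Fin m → ℝ) :
    birkhoffSum f (logGrowth Y C s p 1) n x = p ⬝ᵥ birkhoffSum f (lvRate Y C) n x := by
  simp [birkhoffSum, logGrowth_one, dotProduct_sum]

theorem exists_mem_face_lvRate_eq_zero (hC : ∀ i j, 0 < C i j) (hs : ∀ i, 0 ≤ s i ∧ s i < 1)
    {p : Fin m → ℝ} {S : Finset (Fin m)} {x : Fin m → ℝ} (hx : x ∈ face Y C s S) {ρ : ℝ}
    (hρ : 0 < ρ) (hfreq : ∃ᶠ t in atTop, ∀ i ∈ S, ρ ≤ (APmap Y C s 1)^[t] x i)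
    (hsum : ∀ n, birkhoffSum (APmap Y C s 1) (logGrowth Y C s p 1) n x ≤ 0) :
    ∃ z ∈ face Y C s S, (∀ i ∈ S, lvRate Y C z i = 0) ∧ p ⬝ᵥ lvRate Y C z ≤ 0 := by
  set f := APmap Y C s 1
  obtain ⟨φ, hφ, hφS⟩ := extraction_of_frequently_atTop hfreq
  have hφ₀ (l : ℕ) : φ (l + 1) ≠ 0 := ((Nat.zero_le _).trans_lt (hφ (Nat.lt_add_one l))).ne'
  obtain ⟨z, hz, ψ, hψ, hlim⟩ := (isCompact_face S).tendsto_subseq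
    fun l => (convex_face S).birkhoffAverage_id_mem (mapsTo_APmap_one_face hC hs S) hx (hφ₀ l)
  set n : ℕ → ℕ := fun l => φ (ψ l + 1)
  have hn : Tendsto (fun l => (n l : ℝ)) atTop atTop := tendsto_natCast_atTop_atTop.comp
    ((hφ.comp (strictMono_id.add_const 1)).comp hψ).tendsto_atTop
  have hrate : Tendsto (fun l => (n l : ℝ)⁻¹ • birkhoffSum f (lvRate Y C) (n l) x) atTop
      (𝓝 (lvRate Y C z)) :=
    ((continuous_lvRate Y C |>.tendsto z).comp hlim).congr fun l =>
      lvRate_birkhoffAverage _ _ (hφ₀ _)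
  refine ⟨z, hz, fun i hi => ?_, ?_⟩
  · have hxi : 0 < x i := (hx.1.1 i).lt_of_ne' fun h0 => by
      have := hφS 0 i hi
      rw [iterate_APmap_apply_eq_zero h0] at this
      linarith
    have hcoord (l : ℕ) : ((n l : ℝ)⁻¹ • birkhoffSum f (lvRate Y C) (n l) x) i
        = (Real.log (f^[n l] x i) - Real.log (x i)) / n l := by
      rw [log_iterate_APmap_one hxi]; simp [div_eq_inv_mul, f]
    refine tendsto_nhds_unique (((continuous_apply i).tendsto _).comp hrate) ?_
    refine tendsto_of_tendsto_of_tendsto_of_le_of_le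
      (tendsto_const_nhds.div_atTop hn : Tendsto (fun l => (Real.log ρ - Real.log (x i)) / n l) _ _)
      (tendsto_const_nhds.div_atTop hn :
        Tendsto (fun l => (Real.log (cubeBound Y C s i) - Real.log (x i)) / n l) _ _)
      (fun l => ?_) (fun l => ?_) <;> simp only [Function.comp_apply, hcoord] <;> gcongr
    · exact hφS _ i hi
    · exact hρ.trans_le (hφS _ i hi)
    · exact ((mapsTo_APmap_one_face hC hs S).iterate _ hx).1.2 i
  · refine le_of_tendsto' (((continuous_const.dotProduct continuous_id).tendsto _).comp hrate)
      fun l => ?_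
    change p ⬝ᵥ ((n l : ℝ)⁻¹ • _) ≤ 0
    rw [dotProduct_smul, ← birkhoffSum_logGrowth_one (s := s), smul_eq_mul]
    exact mul_nonpos_of_nonneg_of_nonpos (by positivity) (hsum _)

/-- Induction on `S`. If the sums stayed nonpositive, either the coordinates in `S` would
frequently all be `≥ δ`, and the Cesàro averages of the orbit would accumulate at a fixed point
contradicting `hfix`, or the orbit would eventually stay `δ`-close to the faces `S.erase i`, near
which the sums increase by `ε` within bounded time, again and again. -/
theorem exists_birkhoffSum_pos_of_mem_face (hC : ∀ i j, 0 < C i j)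
    (hs : ∀ i, 0 ≤ s i ∧ s i < 1) {p : Fin m → ℝ} (hfix : PermanenceWeights Y C p)
    {S : Finset (Fin m)} (hS : S ≠ Finset.univ) {x : Fin m → ℝ} (hx : x ∈ face Y C s S) :
    ∃ n, 0 < birkhoffSum (APmap Y C s 1) (logGrowth Y C s p 1) n x := by
  induction S using Finset.strongInduction generalizing x with
  | H S ih =>
  have hK : IsCompact (⋃ i ∈ S, face Y C s (S.erase i)) :=
    S.isCompact_biUnion fun i _ => isCompact_face _
  obtain ⟨δ, hδ, _, ε, hε, hgain⟩ := hK.exists_thickening_forall_exists_le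
    (F := fun n => birkhoffSum (APmap Y C s 1) (logGrowth Y C s p 1) n) fun y hy => by
      obtain ⟨i, hi, hyi⟩ := Set.mem_iUnion₂.1 hy
      obtain ⟨n, hn⟩ := ih _ (Finset.erase_ssubset hi)
        (fun h => hS (Finset.univ_subset_iff.1 (h ▸ Finset.erase_subset i S))) hyi
      exact ⟨n, hn, (continuousAt_birkhoffSum_logGrowth Y C s p n y).comp
        (Continuous.prodMk_right 1).continuousAt⟩
  by_contra! hle
  by_cases hfreq : ∃ᶠ t in atTop, ∀ i ∈ S, δ ≤ (APmap Y C s 1)^[t] x i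
  · obtain ⟨z, hz, hzS, hpz⟩ := exists_mem_face_lvRate_eq_zero hC hs hx hδ hfreq hle
    obtain ⟨j, hj⟩ : ∃ j, j ∉ S := by simpa [Finset.eq_univ_iff_forall] using hS
    refine (hfix z hz.1.1 (fun i => ?_)
      (Finset.prod_eq_zero (Finset.mem_univ j) (hz.2 j hj))).not_ge hpz
    by_cases hi : i ∈ S
    · rw [hzS i hi, Real.exp_zero, mul_one]
    · rw [hz.2 i hi, zero_mul]
  · refine not_bddAbove_range_of_eventually_exists_add_le hε ?_
      ⟨0, Set.forall_mem_range.2 hle⟩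
    filter_upwards [not_frequently.1 hfreq] with t ht
    push Not at ht
    obtain ⟨i, hi, hti⟩ := ht
    have hy := (mapsTo_APmap_one_face hC hs S).iterate t hx
    obtain ⟨n, -, hn⟩ := hgain _ (Metric.thickening_subset_of_subset δ
      (Set.subset_biUnion_of_mem (u := fun i => face Y C s (S.erase i)) hi)
      (mem_thickening_face_erase hC hs hy hti))
    exact ⟨n, by rw [birkhoffSum_add]; linarith⟩

theorem exists_uniform_gain (hC : ∀ i j, 0 < C i j) (hs : ∀ i, 0 ≤ s i ∧ s i < 1)
    {p : Fin m → ℝ} (hfix : PermanenceWeights Y C p) :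
    ∃ δ > 0, ∃ N, ∃ ε > 0, ∀ g : Fin m → ℝ, (∀ i, |g i - 1| < δ) →
      ∀ y ∈ Set.Icc 0 (cubeBound Y C s), (∃ i, y i < δ) →
        ∃ n ≤ N, ε ≤ birkhoffSum (APmap Y C s g) (logGrowth Y C s p g) n y := by
  have hK : IsCompact (({1} : Set (Fin m → ℝ)) ×ˢ ⋃ i, face Y C s (Finset.univ.erase i)) :=
    isCompact_singleton.prod (isCompact_iUnion fun i => isCompact_face _)
  obtain ⟨δ, hδ, N, ε, hε, hgain⟩ := hK.exists_thickening_forall_exists_le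
    (F := fun n q => birkhoffSum (APmap Y C s q.1) (logGrowth Y C s p q.1) n q.2) <| by
      rintro ⟨g, y⟩ ⟨rfl, hy⟩
      obtain ⟨i, hyi⟩ := Set.mem_iUnion.1 hy
      obtain ⟨n, hn⟩ := exists_birkhoffSum_pos_of_mem_face hC hs hfix
        (Finset.erase_ssubset (Finset.mem_univ i)).ne hyi
      exact ⟨n, hn, continuousAt_birkhoffSum_logGrowth Y C s p n y⟩
  refine ⟨δ, hδ, N, ε, hε, fun g hg y hy ⟨i, hyi⟩ => hgain (g, y) ?_⟩
  obtain ⟨y', hy', hyy'⟩ := Metric.mem_thickening_iff.1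
    (mem_thickening_face_erase hC hs (S := Finset.univ) ⟨hy, by simp⟩ hyi)
  refine Metric.mem_thickening_iff.2 ⟨(1, y'), ⟨rfl, Set.mem_iUnion.2 ⟨i, hy'⟩⟩, ?_⟩
  rw [Prod.dist_eq]
  exact max_lt ((dist_pi_lt_iff hδ).2 fun j => by simpa [Real.dist_eq] using hg j) hyy'

end LotkaVolterra

section Permanence

variable {m : ℕ} {Y : Fin m → ℝ} {C : Matrix (Fin m) (Fin m) ℝ} {s p : Fin m → ℝ}

theorem logPotential_le_logPotential (hp : ∀ i, 0 ≤ p i) {x y : Fin m → ℝ}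
    (hx : ∀ i, 0 < x i) (hxy : x ≤ y) : logPotential p x ≤ logPotential p y :=
  Finset.sum_le_sum fun i _ => mul_le_mul_of_nonneg_left (Real.log_le_log (hx i) (hxy i)) (hp i)

theorem logPotential_APmap (hs₀ : ∀ i, 0 ≤ s i) {g x : Fin m → ℝ}
    (hg : ∀ i, 0 < g i ∧ g i ≤ 1) (hx : ∀ i, 0 < x i) :
    logPotential p (APmap Y C s g x) = logPotential p x + logGrowth Y C s p g x := by
  simp only [logPotential, logGrowth, APmap_apply, ← Finset.sum_add_distrib, ← mul_add]
  refine Finset.sum_congr rfl fun i _ => ?_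
  rw [Real.log_mul (hx i).ne' (growthFactor_pos hs₀ hg x i).ne']

theorem sum_log_add_lvRate_le_logGrowth (hC : ∀ i j, 0 < C i j) (hs₀ : ∀ i, 0 ≤ s i)
    (hp : ∀ i, 0 ≤ p i) {γ : ℝ} (hγ : 0 < γ) {g x : Fin m → ℝ} (hg : ∀ i, γ ≤ g i ∧ g i ≤ 1)
    (hx : x ∈ Set.Icc 0 (cubeBound Y C s)) :
    ∑ i, p i * (Real.log γ + lvRate Y C (cubeBound Y C s) i) ≤ logGrowth Y C s p g x := by
  refine Finset.sum_le_sum fun i _ => mul_le_mul_of_nonneg_left ?_ (hp i)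
  have hsum : ∑ j, C i j * (g j * x j) ≤ ∑ j, C i j * cubeBound Y C s j :=
    Finset.sum_le_sum fun j _ => mul_le_mul_of_nonneg_left
      ((mul_le_of_le_one_left (hx.1 j) (hg j).2).trans (hx.2 j)) (hC i j).le
  have hrate : lvRate Y C (cubeBound Y C s) i ≤ Y i - ∑ j, C i j * (g j * x j) :=
    sub_le_sub_left hsum _
  have hlow : γ * Real.exp (lvRate Y C (cubeBound Y C s) i) ≤ growthFactor Y C s g x i :=
    le_add_of_le_of_nonneg
      (mul_le_mul (hg i).1 (Real.exp_le_exp.2 hrate) (Real.exp_pos _).le (hγ.le.trans (hg i).1))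
      (mul_nonneg (sub_nonneg.2 (hg i).2) (hs₀ i))
  calc Real.log γ + lvRate Y C (cubeBound Y C s) i
      = Real.log (γ * Real.exp (lvRate Y C (cubeBound Y C s) i)) := by
        rw [Real.log_mul hγ.ne' (Real.exp_pos _).ne', Real.log_exp]
    _ ≤ Real.log (growthFactor Y C s g x i) := Real.log_le_log (by positivity) hlow

theorem exp_le_of_le_logPotential (hp : ∀ i, 0 < p i) {x K : Fin m → ℝ} (hx : ∀ i, 0 < x i)
    (hxK : x ≤ K) (hK : ∀ i, 1 ≤ K i) {c : ℝ} (hc : c ≤ logPotential p x) (i : Fin m) :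
    Real.exp (-|c - logPotential p K| * ∑ j, (p j)⁻¹) ≤ x i := by
  have hrest : ∑ j ∈ Finset.univ.erase i, p j * Real.log (x j) ≤ logPotential p K :=
    calc ∑ j ∈ Finset.univ.erase i, p j * Real.log (x j)
        ≤ ∑ j ∈ Finset.univ.erase i, p j * Real.log (K j) :=
          Finset.sum_le_sum fun j _ =>
            mul_le_mul_of_nonneg_left (Real.log_le_log (hx j) (hxK j)) (hp j).le
      _ ≤ logPotential p K :=
          Finset.sum_le_sum_of_subset_of_nonneg (Finset.erase_subset _ _) fun j _ _ =>
            mul_nonneg (hp j).le (Real.log_nonneg (hK j))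
  have hsplit := Finset.add_sum_erase Finset.univ (fun j => p j * Real.log (x j))
    (Finset.mem_univ i)
  have hi : -|c - logPotential p K| ≤ p i * Real.log (x i) := by
    unfold logPotential at hc; linarith [neg_abs_le (c - logPotential p K)]
  have hinv : (p i)⁻¹ ≤ ∑ j, (p j)⁻¹ :=
    Finset.single_le_sum (fun j _ => (inv_pos.2 (hp j)).le) (Finset.mem_univ i)
  rw [← Real.exp_log (hx i)]
  gcongr
  calc -|c - logPotential p K| * ∑ j, (p j)⁻¹ ≤ -|c - logPotential p K| * (p i)⁻¹ :=
        mul_le_mul_of_nonpos_left hinv (neg_nonpos.2 (abs_nonneg _))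
    _ ≤ Real.log (x i) := by
        rw [← div_eq_mul_inv, div_le_iff₀ (hp i)]; linarith

theorem exists_pos_eventually_lt_iterate (hC : ∀ i j, 0 < C i j)
    (hs : ∀ i, 0 ≤ s i ∧ s i < 1) (hp : ∀ i, 0 < p i) {γ : ℝ} (hγ : 0 < γ) {g : Fin m → ℝ}
    (hg : ∀ i, γ ≤ g i ∧ g i ≤ 1) {δ ε : ℝ} {N : ℕ} (hδ : 0 < δ) (hε : 0 < ε)
    (hgain : ∀ y ∈ Set.Icc 0 (cubeBound Y C s), (∃ i, y i < δ) →
      ∃ n ≤ N, ε ≤ birkhoffSum (APmap Y C s g) (logGrowth Y C s p g) n y) :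
    ∃ η > 0, ∀ x ∈ Set.Icc 0 (cubeBound Y C s), (∀ i, 0 < x i) →
      ∀ᶠ t in atTop, ∀ i, η < (APmap Y C s g)^[t] x i := by
  set K := cubeBound Y C s
  set F := APmap Y C s g
  have hs₀ (i : Fin m) : 0 ≤ s i := (hs i).1
  have hg₀ (i : Fin m) : 0 < g i ∧ g i ≤ 1 := ⟨hγ.trans_le (hg i).1, (hg i).2⟩
  set L := ∑ i, p i * (Real.log γ + lvRate Y C K i)
  set c := logPotential p (fun _ => δ) - (max N 1 : ℕ) * |L|
  refine ⟨Real.exp (-|c - logPotential p K| * ∑ j, (p j)⁻¹) / 2, by positivity,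
    fun x hx hxpos => ?_⟩
  have hpos (t : ℕ) : ∀ i, 0 < F^[t] x i := (mapsTo_APmap_pos hs₀ hg₀).iterate t hxpos
  have horb (t : ℕ) : F^[t] x ∈ Set.Icc 0 K :=
    (mapsTo_APmap_Icc hC hs fun i => ⟨(hg₀ i).1.le, (hg i).2⟩).iterate t hx
  set v : ℕ → ℝ := fun t => logPotential p (F^[t] x)
  have hv (t n : ℕ) : v (t + n) = v t + birkhoffSum F (logGrowth Y C s p g) n (F^[t] x) := by
    simp only [v, add_comm t n, Function.iterate_add_apply]
    exact apply_iterate_eq_add_birkhoffSum (mapsTo_APmap_pos hs₀ hg₀)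
      (fun y hy => logPotential_APmap hs₀ hg₀ hy) (hpos t) n
  have hlarge : ∀ᶠ t in atTop, c ≤ v t := by
    refine eventually_sub_mul_le_of_exists_add_le (le_max_right N 1) hε (abs_nonneg L)
      ⟨logPotential p K, Set.forall_mem_range.2 fun t =>
        logPotential_le_logPotential (fun i => (hp i).le) (hpos t) (horb t).2⟩
      (fun t => ?_) (fun t ht => ?_)
    · rw [hv t 1, birkhoffSum_one]
      linarith [neg_abs_le L,
        sum_log_add_lvRate_le_logGrowth hC hs₀ (fun i => (hp i).le) hγ hg (horb t)]
    · obtain ⟨i, hi⟩ : ∃ i, F^[t] x i < δ := by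
        by_contra! h
        exact ht.not_ge (logPotential_le_logPotential (fun i => (hp i).le) (fun _ => hδ) h)
      obtain ⟨n, hnN, hn⟩ := hgain _ (horb t) ⟨i, hi⟩
      exact ⟨n, hnN.trans (le_max_left _ _), by rw [hv]; linarith⟩
  filter_upwards [hlarge] with t ht i
  exact (half_lt_self (Real.exp_pos _)).trans_le <|
    exp_le_of_le_logPotential hp (hpos t) (horb t).2 (one_le_cubeBound hC hs) ht i

end Permanence

theorem annual_plant_permanent_general {m : ℕ} (Y : Fin m → ℝ)
    (C : Matrix (Fin m) (Fin m) ℝ) (s : Fin m → ℝ)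
    (hC : ∀ i j, 0 < C i j)
    (hs : ∀ i, 0 ≤ s i ∧ s i < 1)
    (p : Fin m → ℝ) (hp : ∀ i, 0 < p i)
    (hfix : ∀ x : Fin m → ℝ, (∀ i, 0 ≤ x i) →
      (∀ i, x i * Real.exp (Y i - ∑ j, C i j * x j) = x i) →
      (∏ i, x i) = 0 →
      0 < ∑ i, p i * (Y i - ∑ j, C i j * x j)) :
    ∃ gt : ℝ, 0 < gt ∧ gt < 1 ∧
      ∀ g : Fin m → ℝ, (∀ i, gt < g i ∧ g i < 1) →
        ∃ η > (0 : ℝ), ∀ x : Fin m → ℝ, (∀ i, 0 < x i) →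
          ∃ T : ℕ, ∀ t ≥ T, ∀ i, η < (APmap Y C s g)^[t] x i := by
  obtain ⟨δ, hδ, N, ε, hε, hgain⟩ := exists_uniform_gain hC hs (p := p) hfix
  refine ⟨max (1 - δ) (1 / 2), by positivity, max_lt (by linarith) (by norm_num), fun g hg => ?_⟩
  have hg' (i : Fin m) : 1 / 2 ≤ g i ∧ g i ≤ 1 :=
    ⟨(le_max_right _ _).trans (hg i).1.le, (hg i).2.le⟩
  have hgδ (i : Fin m) : |g i - 1| < δ := by
    rw [abs_sub_lt_iff]; constructor <;> linarith [le_max_left (1 - δ) (1 / 2), hg i]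
  obtain ⟨η, hη, hperm⟩ :=
    exists_pos_eventually_lt_iterate hC hs hp (by norm_num) hg' hδ hε (hgain g hgδ)
  refine ⟨η, hη, fun x hx => ?_⟩
  have hg₀ (i : Fin m) : 0 < g i ∧ g i ≤ 1 := ⟨by linarith [(hg' i).1], (hg' i).2⟩
  obtain ⟨T₀, hT₀⟩ := (eventually_iterate_APmap_mem_Icc (Y := Y) hC hs
    (fun i => ⟨(hg₀ i).1.le, (hg₀ i).2⟩) fun i => (hx i).le).exists
  have hpos := (mapsTo_APmap_pos (Y := Y) (C := C) (fun i => (hs i).1) hg₀).iterate T₀ hx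
  obtain ⟨T₁, hT₁⟩ := eventually_atTop.1 (hperm _ hT₀ hpos)
  refine ⟨T₁ + T₀, fun t ht i => ?_⟩
  obtain ⟨k, rfl⟩ := Nat.exists_eq_add_of_le ht
  rw [show T₁ + T₀ + k = (T₁ + k) + T₀ by omega, Function.iterate_add_apply]
  exact hT₁ _ (by omega) i

/-- Corollary of Theorem 4: if positive weights witness the
permanence condition at every boundary equilibrium of the associated
Lotka–Volterra system `x ↦ x ∘ exp(Y − Cx)`, then the annual plant model is
permanent for all germination fractions sufficiently close to 1. -/
theorem annual_plant_permanent {m : ℕ} (Y : Fin m → ℝ)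
    (C : Matrix (Fin m) (Fin m) ℝ) (s : Fin m → ℝ)
    (hY : ∀ i, 0 < Y i) (hC : ∀ i j, 0 < C i j)
    (hs : ∀ i, 0 ≤ s i ∧ s i < 1)
    (p : Fin m → ℝ) (hp : ∀ i, 0 < p i)
    (hfix : ∀ x : Fin m → ℝ, (∀ i, 0 ≤ x i) →
      (∀ i, x i * Real.exp (Y i - ∑ j, C i j * x j) = x i) →
      (∏ i, x i) = 0 →
      0 < ∑ i, p i * (Y i - ∑ j, C i j * x j)) :
    ∃ gt : ℝ, 0 < gt ∧ gt < 1 ∧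
      ∀ g : Fin m → ℝ, (∀ i, gt < g i ∧ g i < 1) →
        ∃ η > (0 : ℝ), ∀ x : Fin m → ℝ, (∀ i, 0 < x i) →
          ∃ T : ℕ, ∀ t ≥ T, ∀ i, η < (APmap Y C s g)^[t] x i :=
  annual_plant_permanent_general Y C s hC hs p hp hfix

end AnnualPlant
end
end
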